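/- arXiv:1009.2007 — 6 statements merged into one kernel-verified Lean document; each statement's English description precedes it below -/
import Mathlib

section
/- A subspace K of H is copyable along δ_e if and only if there exists a set S ⊆ ι such that K is the linear span of { e i | i ∈ S }. -/
open scoped TensorProduct InnerProductSpace

/-- The orthogonal projection of `H` onto the subspace `K`, regarded as an endomorphism
`P_K : H →ₗ[ℂ] H`. -/
noncomputable def projL {H : Type*} [NormedAddCommGroup H] [InnerProductSpace ℂ H]
    [FiniteDimensional ℂ H] (K : Submodule ℂ H) : H →ₗ[ℂ] H :=
  K.subtype ∘ₗ K.orthogonalProjectionOnto.toLinearMap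

/-- The classical structure `δ_e : H →ₗ[ℂ] H ⊗[ℂ] H` associated with an orthonormal basis
`e`, determined by `δ_e x = ∑ i, ⟪e i, x⟫_ℂ • (e i ⊗ₜ e i)`. -/
noncomputable def delta {ι H : Type*} [Fintype ι] [NormedAddCommGroup H]
    [InnerProductSpace ℂ H] (e : ι → H) : H →ₗ[ℂ] H ⊗[ℂ] H :=
  ∑ i, (innerSL ℂ (e i)).toLinearMap.smulRight (e i ⊗ₜ[ℂ] e i)

/-- A subspace `K` of `H` is copyable along `δ_e` if `δ_e ∘ₗ P_K = (P_K ⊗ P_K) ∘ₗ δ_e`. -/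
def Copyable {ι H : Type*} [Fintype ι] [NormedAddCommGroup H] [InnerProductSpace ℂ H]
    [FiniteDimensional ℂ H] (e : ι → H) (K : Submodule ℂ H) : Prop :=
  delta e ∘ₗ projL K = TensorProduct.map (projL K) (projL K) ∘ₗ delta e

/-! In the product basis `e i ⊗ₜ e j` of `H ⊗ H`, the coordinates of `δ_e x` are
`if i = j then ⟪e i, x⟫ else 0`, while those of `x ⊗ₜ x` are `⟪e i, x⟫ * ⟪e j, x⟫`; hence
`δ_e x = x ⊗ₜ x` exactly when `x = 0` or `x` is one of the `e j`. Evaluating the copyability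
equation on the basis shows that `K` is copyable iff each `P_K (e i)` is `0` or some `e j`.
Then `K = range P_K` is spanned by the basis vectors it contains; conversely the projection onto
`span (e '' S)` fixes `e i` for `i ∈ S` and kills it otherwise. -/

section

variable {H : Type*} [NormedAddCommGroup H] [InnerProductSpace ℂ H] [FiniteDimensional ℂ H]

theorem range_projL (K : Submodule ℂ H) : LinearMap.range (projL K) = K :=
  K.range_starProjection

theorem projL_apply_mem (K : Submodule ℂ H) (x : H) : projL K x ∈ K :=
  K.starProjection_apply_mem x

theorem projL_apply_eq_self_iff {K : Submodule ℂ H} {x : H} : projL K x = x ↔ x ∈ K :=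
  Submodule.starProjection_eq_self_iff

theorem projL_apply_eq_zero_iff {K : Submodule ℂ H} {x : H} : projL K x = 0 ↔ x ∈ Kᗮ :=
  Submodule.starProjection_apply_eq_zero_iff K

theorem projL_span_image_apply {ι : Type*} {v : ι → H} (hv : Orthonormal ℂ v) (S : Set ι)
    (i : ι) [Decidable (i ∈ S)] :
    projL (Submodule.span ℂ (v '' S)) (v i) = if i ∈ S then v i else 0 := by
  split_ifs with hi
  · exact projL_apply_eq_self_iff.2 (Submodule.subset_span ⟨i, hi, rfl⟩)
  · refine projL_apply_eq_zero_iff.2 ?_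
    have hortho : Submodule.span ℂ {v i} ⟂ Submodule.span ℂ (v '' S) := by
      rw [Submodule.isOrtho_span]
      rintro _ rfl _ ⟨j, hj, rfl⟩
      exact hv.2 fun hij => hi (hij ▸ hj)
    exact Submodule.isOrtho_iff_le.1 hortho (Submodule.mem_span_singleton_self _)

theorem eq_span_image_of_forall_projL_apply {ι : Type*} {v : ι → H}
    (hv : Submodule.span ℂ (Set.range v) = ⊤) {K : Submodule ℂ H}
    (h : ∀ i, projL K (v i) = 0 ∨ ∃ j, projL K (v i) = v j) :
    K = Submodule.span ℂ (v '' {j | v j ∈ K}) := by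
  refine le_antisymm ?_ (Submodule.span_le.2 <| Set.image_subset_iff.2 fun j hj => hj)
  calc K = (Submodule.span ℂ (Set.range v)).map (projL K) := by
        rw [hv, Submodule.map_top, range_projL]
    _ ≤ _ := by
      rw [Submodule.map_span, Submodule.span_le]
      rintro _ ⟨_, ⟨i, rfl⟩, rfl⟩
      rcases h i with h0 | ⟨j, hj⟩
      · simp [h0]
      · have hj_mem : v j ∈ K := hj ▸ projL_apply_mem K (v i)
        exact Submodule.subset_span ⟨j, hj_mem, hj.symm⟩

end

theorem Finsupp.eq_zero_or_eq_single_one_of_mul_apply {ι R : Type*} [DecidableEq ι]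
    [MonoidWithZero R] [IsLeftCancelMulZero R] {c : ι →₀ R}
    (h : ∀ j k, c j * c k = if j = k then c j else 0) :
    c = 0 ∨ ∃ j, c = Finsupp.single j 1 := by
  by_cases hc : c = 0
  · exact .inl hc
  obtain ⟨j, hj⟩ := Finsupp.ne_iff.1 hc
  have hj1 : c j = 1 := mul_left_cancel₀ hj <| by simpa using h j j
  refine .inr ⟨j, Finsupp.ext fun k => ?_⟩
  by_cases hk : j = k
  · simp [← hk, hj1]
  · simpa [hk, hj1] using h j k

section

variable {ι H : Type*} [Fintype ι] [NormedAddCommGroup H] [InnerProductSpace ℂ H]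

theorem delta_apply (e : ι → H) (x : H) :
    delta e x = ∑ i, ⟪e i, x⟫_ℂ • (e i ⊗ₜ[ℂ] e i) := by
  simp [delta]

theorem delta_apply_self (e : OrthonormalBasis ι ℂ H) (i : ι) :
    delta e (e i) = e i ⊗ₜ[ℂ] e i := by
  classical
  simp [delta_apply, orthonormal_iff_ite.1 e.orthonormal]

theorem tensorProduct_repr_delta [DecidableEq ι] (e : OrthonormalBasis ι ℂ H) (x : H)
    (j k : ι) :
    (e.toBasis.tensorProduct e.toBasis).repr (delta e x) (j, k) =
      if j = k then ⟪e j, x⟫_ℂ else 0 := by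
  simp [delta_apply, eq_comm]

theorem delta_eq_tmul_self_iff [DecidableEq ι] (e : OrthonormalBasis ι ℂ H) {x : H} :
    delta e x = x ⊗ₜ[ℂ] x ↔ x = 0 ∨ ∃ j, x = e j := by
  refine ⟨fun h => ?_, ?_⟩
  · have hmul : ∀ j k, e.toBasis.repr x j * e.toBasis.repr x k =
        if j = k then e.toBasis.repr x j else 0 := fun j k => by
      simpa [tensorProduct_repr_delta, mul_comm, OrthonormalBasis.repr_apply_apply] using
        congr_arg (fun t => (e.toBasis.tensorProduct e.toBasis).repr t (j, k)) h.symm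
    refine (Finsupp.eq_zero_or_eq_single_one_of_mul_apply hmul).imp (by simp) ?_
    rintro ⟨j, hj⟩
    exact ⟨j, e.toBasis.repr.injective (hj.trans (e.toBasis.repr_self j).symm)⟩
  · rintro (rfl | ⟨j, rfl⟩)
    · simp
    · exact delta_apply_self e j

variable [FiniteDimensional ℂ H]

theorem copyable_iff_forall_delta_projL (e : OrthonormalBasis ι ℂ H) (K : Submodule ℂ H) :
    Copyable e K ↔ ∀ i, delta e (projL K (e i)) = projL K (e i) ⊗ₜ[ℂ] projL K (e i) := by
  refine ⟨fun h i => ?_, fun h => e.toBasis.ext fun i => ?_⟩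
  · simpa [delta_apply_self] using LinearMap.congr_fun h (e i)
  · simpa [delta_apply_self] using h i

end

/-- A subspace `K` of `H` is copyable along `δ_e` if and only if it is the linear span of a
subset of the orthonormal basis `e`. -/
theorem copyable_iff_span_image
    {ι H : Type*} [Fintype ι] [NormedAddCommGroup H] [InnerProductSpace ℂ H]
    [FiniteDimensional ℂ H] (e : OrthonormalBasis ι ℂ H) (K : Submodule ℂ H) :
    Copyable (⇑e) K ↔ ∃ S : Set ι, K = Submodule.span ℂ (⇑e '' S) := by
  classical
  simp only [copyable_iff_forall_delta_projL, delta_eq_tmul_self_iff]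
  refine ⟨fun h => ⟨_, eq_span_image_of_forall_projL_apply e.toBasis.span_eq h⟩, ?_⟩
  rintro ⟨S, rfl⟩ i
  rw [projL_span_image_apply e.orthonormal]
  split_ifs
  exacts [.inr ⟨i, rfl⟩, .inl rfl]
end

section
/- A subspace K of H is copyable along δ_e if and only if there exists a (necessarily unique) linear map δ_K : K →ₗ[ℂ] K ⊗[ℂ] K making both squares commute: (TensorProduct.map K.subtype K.subtype) ∘ₗ δ_K = δ_e ∘ₗ K.subtype, and δ_K ∘ₗ π_K = (TensorProduct.map π_K π_K) ∘ₗ δ_e, where K.subtype : K →ₗ[ℂ] H is the inclusion and π_K : H →ₗ[ℂ] K is the orthogonal projection of H onto K (with codomain K). -/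
open scoped TensorProduct InnerProductSpace

/-! Only the retraction `π_K ∘ ι = id` (with `ι = K.subtype`) matters: `P_K = ι ∘ π_K`, and
`P_K ⊗ P_K = (ι ⊗ ι) ∘ (π_K ⊗ π_K)` is again of this form. For retraction pairs `(s, π)`, `(s', π')`
and any `f`, `f ∘ s ∘ π = s' ∘ π' ∘ f` forces `g := π' ∘ f ∘ s` to satisfy both squares, and
`g ∘ π = π' ∘ f` alone already determines `g` after composing with `s`. -/

section Retraction

variable {R M N M' N' : Type*} [Semiring R] [AddCommMonoid M] [AddCommMonoid N]
  [AddCommMonoid M'] [AddCommMonoid N'] [Module R M] [Module R N] [Module R M'] [Module R N']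
  {s : N →ₗ[R] M} {π : M →ₗ[R] N} {s' : N' →ₗ[R] M'} {π' : M' →ₗ[R] N'}

theorem LinearMap.comp_retract_eq_iff_existsUnique_restrict
    (hπs : π ∘ₗ s = LinearMap.id) (hπs' : π' ∘ₗ s' = LinearMap.id) (f : M →ₗ[R] M') :
    f ∘ₗ s ∘ₗ π = s' ∘ₗ π' ∘ₗ f ↔ ∃! g : N →ₗ[R] N', s' ∘ₗ g = f ∘ₗ s ∧ g ∘ₗ π = π' ∘ₗ f := by
  constructor
  · intro h
    refine ⟨π' ∘ₗ f ∘ₗ s, ⟨?_, ?_⟩, fun g ⟨_, hg⟩ => ?_⟩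
    · calc s' ∘ₗ π' ∘ₗ f ∘ₗ s = (f ∘ₗ s ∘ₗ π) ∘ₗ s := by rw [h]; rfl
        _ = f ∘ₗ s := by rw [LinearMap.comp_assoc, LinearMap.comp_assoc, hπs]; rfl
    · calc (π' ∘ₗ f ∘ₗ s) ∘ₗ π = π' ∘ₗ s' ∘ₗ π' ∘ₗ f := by rw [← h]; rfl
        _ = π' ∘ₗ f := by rw [← LinearMap.comp_assoc, hπs']; rfl
    · calc g = (g ∘ₗ π) ∘ₗ s := by rw [LinearMap.comp_assoc, hπs]; rfl
        _ = π' ∘ₗ f ∘ₗ s := by rw [hg]; rfl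
  · rintro ⟨g, ⟨hs, hπ⟩, -⟩
    calc f ∘ₗ s ∘ₗ π = s' ∘ₗ g ∘ₗ π := by rw [← LinearMap.comp_assoc, ← hs]; rfl
      _ = s' ∘ₗ π' ∘ₗ f := by rw [hπ]

end Retraction

theorem TensorProduct.map_comp_map_eq_id {R M N : Type*} [CommSemiring R] [AddCommMonoid M]
    [AddCommMonoid N] [Module R M] [Module R N] {s : N →ₗ[R] M} {π : M →ₗ[R] N}
    (hπs : π ∘ₗ s = LinearMap.id) : map π π ∘ₗ map s s = LinearMap.id := by
  rw [← map_comp, hπs, map_id]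

/-- A subspace `K` is copyable along `δ_e` iff there is a (necessarily unique) linear map
`δ_K : K →ₗ[ℂ] K ⊗[ℂ] K` with `(K.subtype ⊗ K.subtype) ∘ₗ δ_K = δ_e ∘ₗ K.subtype` and
`δ_K ∘ₗ π_K = (π_K ⊗ π_K) ∘ₗ δ_e`, where `π_K` is the orthogonal projection onto `K`. -/
theorem copyable_iff_exists_restriction
    {ι H : Type*} [Fintype ι] [NormedAddCommGroup H] [InnerProductSpace ℂ H]
    [FiniteDimensional ℂ H] (e : OrthonormalBasis ι ℂ H) (K : Submodule ℂ H) :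
    Copyable (⇑e) K ↔
      ∃! δK : K →ₗ[ℂ] K ⊗[ℂ] K,
        TensorProduct.map K.subtype K.subtype ∘ₗ δK = delta (⇑e) ∘ₗ K.subtype ∧
        δK ∘ₗ K.orthogonalProjectionOnto.toLinearMap =
          TensorProduct.map K.orthogonalProjectionOnto.toLinearMap
              K.orthogonalProjectionOnto.toLinearMap ∘ₗ delta (⇑e) := by
  have hπs : K.orthogonalProjectionOnto.toLinearMap ∘ₗ K.subtype = LinearMap.id := by
    ext x
    simp
  rw [Copyable, projL, TensorProduct.map_comp]
  exact LinearMap.comp_retract_eq_iff_existsUnique_restrict hπs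
    (TensorProduct.map_comp_map_eq_id hπs) (delta e)
end

section
/- The subspaces of H copyable along δ_e form a Boolean subalgebra of the lattice of subspaces of H: the collection of copyable subspaces contains ⊥ and ⊤, is closed under meet ⊓, join ⊔ and orthogonal complement ᗮ, and is distributive, i.e. for all copyable K, L, M one has K ⊓ (L ⊔ M) = (K ⊓ L) ⊔ (K ⊓ M). -/
open scoped TensorProduct InnerProductSpace

/-! A subspace `K` is copyable along `δ_e` exactly when every basis vector `e j` lies in `K` or
in `Kᗮ`. Indeed, evaluating `δ_e ∘ P_K = (P_K ⊗ P_K) ∘ δ_e` at `e j` and reading off the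
`e j ⊗ e j`-coefficient gives `c = c²` for `c = ⟪e j, P_K (e j)⟫ = ‖P_K (e j)‖²`, so the
projection of the unit vector `e j` onto `K` has norm `0` or `1`; conversely, if every `e j` lies
in `K` or `Kᗮ`, both sides agree on the basis. Through this description, `K` corresponds to the
set `{j | e j ∈ K}`, and `⊓`, `⊔`, `ᗮ` correspond to intersection, union and complement. -/

namespace Submodule

variable {𝕜 E : Type*} [RCLike 𝕜] [NormedAddCommGroup E] [InnerProductSpace 𝕜 E]

theorem inner_starProjection_self (K : Submodule 𝕜 E) [K.HasOrthogonalProjection] (v : E) :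
    ⟪v, K.starProjection v⟫_𝕜 = (‖K.starProjection v‖ ^ 2 : ℝ) := by
  conv_lhs => rw [← K.starProjection_eq_self_iff.mpr (K.starProjection_apply_mem v),
    ← K.inner_starProjection_left_eq_right]
  exact_mod_cast inner_self_eq_norm_sq_to_K _

theorem mem_or_mem_orthogonal_of_inner_starProjection_sq (K : Submodule 𝕜 E)
    [K.HasOrthogonalProjection] {v : E} (hv : ‖v‖ = 1)
    (h : ⟪v, K.starProjection v⟫_𝕜 ^ 2 = ⟪v, K.starProjection v⟫_𝕜) : v ∈ K ∨ v ∈ Kᗮ := by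
  have hpyth := K.norm_sq_eq_add_norm_sq_starProjection v
  rw [K.inner_starProjection_self] at h
  have hidem : (‖K.starProjection v‖ ^ 2) ^ 2 = ‖K.starProjection v‖ ^ 2 := by exact_mod_cast h
  rcases eq_zero_or_one_of_sq_eq_self hidem with h0 | h1
  · right
    rw [← K.starProjection_apply_eq_zero_iff, ← norm_eq_zero]
    exact pow_eq_zero_iff two_ne_zero |>.mp h0
  · left
    rw [hv, h1] at hpyth
    rw [← K.orthogonal_orthogonal, ← Kᗮ.starProjection_apply_eq_zero_iff, ← norm_eq_zero]
    exact pow_eq_zero_iff two_ne_zero |>.mp (by linarith)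

end Submodule

section

variable {ι H : Type*} [Fintype ι] [NormedAddCommGroup H] [InnerProductSpace ℂ H]

theorem projL_apply [FiniteDimensional ℂ H] (K : Submodule ℂ H) (x : H) :
    projL K x = K.starProjection x := rfl

theorem delta_apply_of_orthonormal {e : ι → H} (he : Orthonormal ℂ e) (j : ι) :
    delta e (e j) = e j ⊗ₜ[ℂ] e j := by
  classical
  simp [delta_apply, orthonormal_iff_ite.mp he]

noncomputable def diagCoeff (v : H) : H ⊗[ℂ] H →ₗ[ℂ] ℂ :=
  TensorProduct.lift ((LinearMap.mul ℂ ℂ).compl₁₂ (innerSL ℂ v).toLinearMap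
    (innerSL ℂ v).toLinearMap)

theorem diagCoeff_tmul (v x y : H) : diagCoeff v (x ⊗ₜ y) = ⟪v, x⟫_ℂ * ⟪v, y⟫_ℂ := rfl

theorem diagCoeff_delta {e : ι → H} (he : Orthonormal ℂ e) (j : ι) (x : H) :
    diagCoeff (e j) (delta e x) = ⟪e j, x⟫_ℂ := by
  classical
  simp [delta_apply, diagCoeff_tmul, orthonormal_iff_ite.mp he]

theorem copyable_bot [FiniteDimensional ℂ H] (e : ι → H) : Copyable e ⊥ := by
  simp [Copyable, projL, Submodule.orthogonalProjectionOnto_bot]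

theorem copyable_top [FiniteDimensional ℂ H] (e : ι → H) : Copyable e ⊤ := by
  have hP : projL (⊤ : Submodule ℂ H) = LinearMap.id :=
    LinearMap.ext fun _ ↦ Submodule.starProjection_eq_self_iff.mpr trivial
  simp [Copyable, hP]

theorem Copyable.mem_or_mem_orthogonal [FiniteDimensional ℂ H] {e : ι → H}
    (he : Orthonormal ℂ e) {K : Submodule ℂ H} (hK : Copyable e K) (j : ι) :
    e j ∈ K ∨ e j ∈ Kᗮ := by
  refine K.mem_or_mem_orthogonal_of_inner_starProjection_sq (he.1 j) ?_
  have := congr(diagCoeff (e j) ($hK (e j)))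
  simpa [diagCoeff_delta he, delta_apply_of_orthonormal he, diagCoeff_tmul, projL_apply, sq]
    using this.symm

theorem copyable_of_forall_mem_or_mem_orthogonal [FiniteDimensional ℂ H]
    (e : OrthonormalBasis ι ℂ H) {K : Submodule ℂ H} (h : ∀ j, e j ∈ K ∨ e j ∈ Kᗮ) :
    Copyable e K := by
  refine e.toBasis.ext fun j ↦ ?_
  have hdelta := delta_apply_of_orthonormal e.orthonormal j
  rcases h j with hj | hj
  · have hP : projL K (e j) = e j := K.starProjection_eq_self_iff.mpr hj
    simp [hP, hdelta]
  · have hP : projL K (e j) = 0 := K.starProjection_apply_eq_zero_iff.mpr hj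
    simp [hP, hdelta]

theorem copyable_iff [FiniteDimensional ℂ H] (e : OrthonormalBasis ι ℂ H) {K : Submodule ℂ H} :
    Copyable e K ↔ ∀ j, e j ∈ K ∨ e j ∈ Kᗮ :=
  ⟨(·.mem_or_mem_orthogonal e.orthonormal), copyable_of_forall_mem_or_mem_orthogonal e⟩

end

namespace Copyable

variable {ι H : Type*} [Fintype ι] [NormedAddCommGroup H] [InnerProductSpace ℂ H]
  [FiniteDimensional ℂ H] {e : OrthonormalBasis ι ℂ H} {K L : Submodule ℂ H}

theorem orthogonal (hK : Copyable e K) : Copyable e Kᗮ := by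
  rw [copyable_iff] at hK ⊢
  exact fun j ↦ (hK j).symm.imp_right fun hj ↦ K.le_orthogonal_orthogonal hj

theorem inf (hK : Copyable e K) (hL : Copyable e L) : Copyable e (K ⊓ L) := by
  rw [copyable_iff] at hK hL ⊢
  intro j
  rcases hK j, hL j with ⟨hjK | hjK, hjL | hjL⟩
  · exact .inl ⟨hjK, hjL⟩
  · exact .inr (Submodule.orthogonal_le inf_le_right hjL)
  all_goals exact .inr (Submodule.orthogonal_le inf_le_left hjK)

theorem sup (hK : Copyable e K) (hL : Copyable e L) : Copyable e (K ⊔ L) := by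
  rw [← (K ⊔ L).orthogonal_orthogonal, ← Submodule.inf_orthogonal]
  exact (hK.orthogonal.inf hL.orthogonal).orthogonal

theorem mem_iff (hK : Copyable e K) {x : H} : x ∈ K ↔ ∀ j, ⟪e j, x⟫_ℂ ≠ 0 → e j ∈ K := by
  refine ⟨fun hx j hj ↦ ?_, fun h ↦ ?_⟩
  · exact (hK.mem_or_mem_orthogonal e.orthonormal j).resolve_right
      fun hj' ↦ hj (Submodule.inner_left_of_mem_orthogonal hx hj')
  · rw [← e.sum_repr' x]
    refine Submodule.sum_mem _ fun j _ ↦ ?_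
    by_cases hj : ⟪e j, x⟫_ℂ = 0
    · simp [hj]
    · exact K.smul_mem _ (h j hj)

theorem basis_mem_or_of_mem_sup (hK : Copyable e K) (hL : Copyable e L) {j : ι}
    (hj : e j ∈ K ⊔ L) : e j ∈ K ∨ e j ∈ L := by
  by_contra! hKL
  have hj' : e j ∈ (K ⊔ L)ᗮ := by
    rw [← Submodule.inf_orthogonal]
    exact ⟨(hK.mem_or_mem_orthogonal e.orthonormal j).resolve_left hKL.1,
      (hL.mem_or_mem_orthogonal e.orthonormal j).resolve_left hKL.2⟩
  have : e j ∈ (K ⊔ L) ⊓ (K ⊔ L)ᗮ := ⟨hj, hj'⟩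
  rw [Submodule.inf_orthogonal_eq_bot, Submodule.mem_bot] at this
  exact e.orthonormal.ne_zero j this

theorem inf_sup_left {M : Submodule ℂ H} (hK : Copyable e K) (hL : Copyable e L)
    (hM : Copyable e M) : K ⊓ (L ⊔ M) = (K ⊓ L) ⊔ (K ⊓ M) := by
  refine le_antisymm (fun x ⟨hxK, hxLM⟩ ↦ ?_) le_inf_sup
  rw [((hK.inf hL).sup (hK.inf hM)).mem_iff]
  intro j hj
  have hjK := hK.mem_iff.mp hxK j hj
  rcases basis_mem_or_of_mem_sup hL hM ((hL.sup hM).mem_iff.mp hxLM j hj) with hjL | hjM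
  · exact Submodule.mem_sup_left ⟨hjK, hjL⟩
  · exact Submodule.mem_sup_right ⟨hjK, hjM⟩

end Copyable

/-- The subspaces of `H` copyable along `δ_e` form a Boolean subalgebra of the lattice of
subspaces of `H`: they contain `⊥` and `⊤`, are closed under `⊓`, `⊔` and orthogonal
complement `ᗮ`, and satisfy the distributive law. -/
theorem copyable_boolean_subalgebra
    {ι H : Type*} [Fintype ι] [NormedAddCommGroup H] [InnerProductSpace ℂ H]
    [FiniteDimensional ℂ H] (e : OrthonormalBasis ι ℂ H) :
    Copyable (⇑e) (⊥ : Submodule ℂ H) ∧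
    Copyable (⇑e) (⊤ : Submodule ℂ H) ∧
    (∀ K L : Submodule ℂ H, Copyable (⇑e) K → Copyable (⇑e) L → Copyable (⇑e) (K ⊓ L)) ∧
    (∀ K L : Submodule ℂ H, Copyable (⇑e) K → Copyable (⇑e) L → Copyable (⇑e) (K ⊔ L)) ∧
    (∀ K : Submodule ℂ H, Copyable (⇑e) K → Copyable (⇑e) Kᗮ) ∧
    (∀ K L M : Submodule ℂ H, Copyable (⇑e) K → Copyable (⇑e) L → Copyable (⇑e) M →
      K ⊓ (L ⊔ M) = (K ⊓ L) ⊔ (K ⊓ M)) :=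
  ⟨copyable_bot e, copyable_top e, fun _ _ ↦ Copyable.inf, fun _ _ ↦ Copyable.sup,
    fun _ ↦ Copyable.orthogonal, fun _ _ _ ↦ Copyable.inf_sup_left⟩
end

section
/- Let H be a finite-dimensional complex inner product space and let L be a set of subspaces of H that contains ⊥ and ⊤ and is closed under meet ⊓, join ⊔ and orthogonal complement ᗮ. Then L is distributive (for all K, M, N ∈ L, K ⊓ (M ⊔ N) = (K ⊓ M) ⊔ (K ⊓ N)) if and only if for all K, M ∈ L with K ⊓ M = ⊥ the subspaces K and M are orthogonal (∀ x ∈ K, ∀ y ∈ M, ⟪x, y⟫_ℂ = 0). -/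
/-!
If distributivity holds, then `M = M ⊓ (K ⊔ Kᗮ) = (M ⊓ K) ⊔ (M ⊓ Kᗮ)`, so `M ⊓ K = ⊥` forces
`M ≤ Kᗮ`. Conversely, for `A, B ∈ L` the member `(A ⊓ B)ᗮ ⊓ A` of `L` meets `B` trivially, hence is
orthogonal to `B`; this makes `A = (A ⊓ B) ⊔ (A ⊓ Bᗮ)`, i.e. the orthogonal projection onto `B`
maps `A` into itself. Projecting `x = m + n ∈ K ⊓ (M ⊔ N)` onto `K` then splits `x` along
`K ⊓ M` and `K ⊓ N`.
-/

open scoped InnerProductSpace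

namespace Submodule

variable {𝕜 E : Type*} [RCLike 𝕜] [NormedAddCommGroup E] [InnerProductSpace 𝕜 E]

theorem isOrtho_of_inf_eq_bot_of_inf_sup_orthogonal {K M : Submodule 𝕜 E}
    [K.HasOrthogonalProjection] (hdist : M ⊓ (K ⊔ Kᗮ) = M ⊓ K ⊔ M ⊓ Kᗮ) (hKM : K ⊓ M = ⊥) :
    K ⟂ M := by
  rw [sup_orthogonal_of_hasOrthogonalProjection, inf_top_eq, inf_comm M K, hKM, bot_sup_eq]
    at hdist
  exact (isOrtho_iff_le.mpr (hdist ▸ inf_le_right)).symm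

theorem orthogonal_inf_inf_inf_eq_bot (A B : Submodule 𝕜 E) : (A ⊓ B)ᗮ ⊓ A ⊓ B = ⊥ := by
  rw [inf_assoc]
  exact (A ⊓ B).orthogonal_disjoint.symm.eq_bot

theorem eq_inf_sup_inf_orthogonal_of_isOrtho {A B : Submodule 𝕜 E}
    [(A ⊓ B).HasOrthogonalProjection] (h : (A ⊓ B)ᗮ ⊓ A ⟂ B) :
    A = A ⊓ B ⊔ A ⊓ Bᗮ := by
  refine le_antisymm ?_ (sup_le inf_le_left inf_le_left)
  calc A = A ⊓ B ⊔ (A ⊓ B)ᗮ ⊓ A :=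
        (sup_orthogonal_inf_of_hasOrthogonalProjection inf_le_left).symm
    _ ≤ A ⊓ B ⊔ A ⊓ Bᗮ := sup_le_sup_left (le_inf inf_le_right h.le) _

theorem mapsTo_starProjection_of_eq_inf_sup_inf_orthogonal {A K : Submodule 𝕜 E}
    [K.HasOrthogonalProjection] (h : A = A ⊓ K ⊔ A ⊓ Kᗮ) :
    Set.MapsTo K.starProjection A A := by
  intro a ha
  rw [SetLike.mem_coe, h, mem_sup] at ha
  obtain ⟨u, hu, v, hv, rfl⟩ := ha
  rw [map_add, starProjection_eq_self_iff.mpr hu.2, (starProjection_apply_eq_zero_iff K).mpr hv.2,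
    add_zero]
  exact hu.1

theorem inf_sup_eq_of_mapsTo_starProjection {K M N : Submodule 𝕜 E} [K.HasOrthogonalProjection]
    (hM : Set.MapsTo K.starProjection M M) (hN : Set.MapsTo K.starProjection N N) :
    K ⊓ (M ⊔ N) = K ⊓ M ⊔ K ⊓ N := by
  refine le_antisymm ?_ (sup_le (inf_le_inf_left _ le_sup_left) (inf_le_inf_left _ le_sup_right))
  rintro x ⟨hxK, hxMN⟩
  obtain ⟨m, hm, n, hn, rfl⟩ := mem_sup.mp hxMN
  rw [← starProjection_eq_self_iff.mpr hxK, map_add]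
  exact add_mem (mem_sup_left ⟨starProjection_apply_mem K m, hM hm⟩)
    (mem_sup_right ⟨starProjection_apply_mem K n, hN hn⟩)

end Submodule

open Submodule in
theorem boolean_iff_disjoint_orthogonal_general
    {H : Type*} [NormedAddCommGroup H] [InnerProductSpace ℂ H] [FiniteDimensional ℂ H]
    (L : Set (Submodule ℂ H))
    (hinf : ∀ K ∈ L, ∀ M ∈ L, K ⊓ M ∈ L)
    (hcompl : ∀ K ∈ L, Kᗮ ∈ L) :
    (∀ K ∈ L, ∀ M ∈ L, ∀ N ∈ L, K ⊓ (M ⊔ N) = (K ⊓ M) ⊔ (K ⊓ N)) ↔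
      (∀ K ∈ L, ∀ M ∈ L, K ⊓ M = ⊥ → ∀ x ∈ K, ∀ y ∈ M, ⟪x, y⟫_ℂ = 0) := by
  constructor
  · intro hdist K hK M hM hKM
    exact isOrtho_iff_inner_eq.mp <|
      isOrtho_of_inf_eq_bot_of_inf_sup_orthogonal (hdist M hM K hK Kᗮ (hcompl K hK)) hKM
  · intro horth K hK M hM N hN
    have hcommute : ∀ A ∈ L, ∀ B ∈ L, A = A ⊓ B ⊔ A ⊓ Bᗮ := fun A hA B hB =>
      eq_inf_sup_inf_orthogonal_of_isOrtho <| isOrtho_iff_inner_eq.mpr <|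
        horth _ (hinf _ (hcompl _ (hinf A hA B hB)) A hA) B hB (orthogonal_inf_inf_inf_eq_bot A B)
    exact inf_sup_eq_of_mapsTo_starProjection
      (mapsTo_starProjection_of_eq_inf_sup_inf_orthogonal (hcommute M hM K hK))
      (mapsTo_starProjection_of_eq_inf_sup_inf_orthogonal (hcommute N hN K hK))

/-- An orthocomplemented sublattice `L` of the lattice of subspaces of a finite-dimensional
complex inner product space is Boolean (distributive) if and only if any two of its members
with trivial intersection are orthogonal. -/
theorem boolean_iff_disjoint_orthogonal
    {H : Type*} [NormedAddCommGroup H] [InnerProductSpace ℂ H] [FiniteDimensional ℂ H]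
    (L : Set (Submodule ℂ H))
    (hbot : ⊥ ∈ L) (htop : ⊤ ∈ L)
    (hinf : ∀ K ∈ L, ∀ M ∈ L, K ⊓ M ∈ L)
    (hsup : ∀ K ∈ L, ∀ M ∈ L, K ⊔ M ∈ L)
    (hcompl : ∀ K ∈ L, Kᗮ ∈ L) :
    (∀ K ∈ L, ∀ M ∈ L, ∀ N ∈ L, K ⊓ (M ⊔ N) = (K ⊓ M) ⊔ (K ⊓ N)) ↔
      (∀ K ∈ L, ∀ M ∈ L, K ⊓ M = ⊥ → ∀ x ∈ K, ∀ y ∈ M, ⟪x, y⟫_ℂ = 0) :=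
  boolean_iff_disjoint_orthogonal_general L hinf hcompl
end

section
/- Let H be a finite-dimensional complex inner product space and let L be a set of subspaces of H that contains ⊥ and ⊤ and is closed under meet ⊓, join ⊔ and orthogonal complement ᗮ. Then L is distributive (for all K, M, N ∈ L, K ⊓ (M ⊔ N) = (K ⊓ M) ⊔ (K ⊓ N)) if and only if there exists an orthonormal basis e : ι → H (ι a finite type) such that every K ∈ L is the span of a subset of { e i | i : ι }. -/
/-!
If `L` is distributive, an atom `A` of `L` (a minimal nonzero member) splits along any `K ∈ L` as
`A = (A ⊓ K) ⊔ (A ⊓ Kᗮ)`, so `A` lies in `K` or in `Kᗮ`. Hence distinct atoms are orthogonal, so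
there are finitely many, and their span has trivial orthogonal complement: that complement is in
`L`, so if nonzero it would contain an atom. An orthonormal basis subordinate to the atoms then
spans every `K ∈ L` by the vectors lying in atoms below `K`, the remaining ones lying in `Kᗮ`.
Conversely, taking spans of subsets of a basis preserves `⊓` and `⊔`, so the distributivity of
the lattice of sets transfers to `L`.
-/

open Submodule Module

theorem Module.Basis.span_image_inf_span_image {ι R M : Type*} [Semiring R] [AddCommMonoid M]
    [Module R M] (b : Basis ι R M) (S T : Set ι) :
    span R (b '' S) ⊓ span R (b '' T) = span R (b '' (S ∩ T)) := by
  ext x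
  simp only [mem_inf, b.mem_span_image, Set.subset_inter_iff]

section InnerProductSpace

variable {𝕜 E : Type*} [RCLike 𝕜] [NormedAddCommGroup E] [InnerProductSpace 𝕜 E]
  {L : Set (Submodule 𝕜 E)}

theorem Submodule.eq_of_le_of_le_orthogonal_of_sup_eq_top {K P Q : Submodule 𝕜 E}
    (hP : P ≤ K) (hQ : Q ≤ Kᗮ) (hPQ : P ⊔ Q = ⊤) : P = K := by
  have hKQ : K ⊓ Q = ⊥ := eq_bot_iff.mpr (K.inf_orthogonal_eq_bot ▸ inf_le_inf_left K hQ)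
  calc P = P ⊔ K ⊓ Q := by rw [hKQ, sup_bot_eq]
    _ = (P ⊔ Q) ⊓ K := by rw [sup_inf_assoc_of_le Q hP, inf_comm]
    _ = K := by rw [hPQ, top_inf_eq]

theorem OrthogonalFamily.exists_orthonormalBasis_forall_eq_span_image {ι : Type*} [Finite ι]
    [FiniteDimensional 𝕜 E] {V : ι → Submodule 𝕜 E}
    (hV : OrthogonalFamily 𝕜 (fun i => V i) fun i => (V i).subtypeₗᵢ) (hV_top : (iSup V)ᗮ = ⊥) :
    ∃ e : OrthonormalBasis (Fin (finrank 𝕜 E)) 𝕜 E, ∀ K : Submodule 𝕜 E,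
      (∀ i, V i ≤ K ∨ V i ≤ Kᗮ) → ∃ S, K = span 𝕜 (e '' S) := by
  classical
  have := Fintype.ofFinite ι
  have hint : DirectSum.IsInternal V := hV.isInternal_iff.mpr hV_top
  let e := hint.subordinateOrthonormalBasis rfl hV
  have he : ∀ a, e a ∈ V (hint.subordinateOrthonormalBasisIndex rfl a hV) :=
    fun a => hint.subordinateOrthonormalBasis_subordinate rfl a hV
  refine ⟨e, fun K hK => ⟨{a | e a ∈ K}, ?_⟩⟩
  refine (eq_of_le_of_le_orthogonal_of_sup_eq_top (Q := span 𝕜 (e '' {a | e a ∈ K}ᶜ))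
    ?_ ?_ ?_).symm
  · exact span_le.mpr (Set.image_subset_iff.mpr fun a ha => ha)
  · refine span_le.mpr (Set.image_subset_iff.mpr fun a ha => ?_)
    exact (hK _).resolve_left (fun hle => ha (hle (he a))) (he a)
  · rw [← span_union, ← Set.image_union, Set.union_compl_self, Set.image_univ,
      ← e.coe_toBasis, e.toBasis.span_eq]

theorem le_orthogonal_of_minimal_of_not_le
    (hdistrib : ∀ K ∈ L, ∀ M ∈ L, ∀ N ∈ L, K ⊓ (M ⊔ N) = (K ⊓ M) ⊔ (K ⊓ N))
    (hinf : InfClosed L) {A K : Submodule 𝕜 E}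
    (hA : Minimal (fun A => A ∈ L ∧ A ≠ ⊥) A) (hK : K ∈ L) (hKc : Kᗮ ∈ L)
    [K.HasOrthogonalProjection] (hAK : ¬ A ≤ K) : A ≤ Kᗮ := by
  have hAK_bot : A ⊓ K = ⊥ := by
    by_contra hne
    exact hAK ((hA.eq_of_le ⟨hinf hA.1.1 hK, hne⟩ inf_le_left).ge.trans inf_le_right)
  calc A = A ⊓ (K ⊔ Kᗮ) := by rw [sup_orthogonal_of_hasOrthogonalProjection, inf_top_eq]
    _ = A ⊓ Kᗮ := by rw [hdistrib A hA.1.1 K hK Kᗮ hKc, hAK_bot, bot_sup_eq]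
    _ ≤ Kᗮ := inf_le_right

theorem orthogonalFamily_minimal_nonzero_of_distrib [FiniteDimensional 𝕜 E]
    (hdistrib : ∀ K ∈ L, ∀ M ∈ L, ∀ N ∈ L, K ⊓ (M ⊔ N) = (K ⊓ M) ⊔ (K ⊓ N))
    (hinf : InfClosed L) (hcompl : ∀ K ∈ L, Kᗮ ∈ L) :
    OrthogonalFamily 𝕜 (fun A : {A // Minimal (fun A => A ∈ L ∧ A ≠ ⊥) A} => (A : Submodule 𝕜 E))
      fun A => (A : Submodule 𝕜 E).subtypeₗᵢ := by
  refine OrthogonalFamily.of_pairwise fun A B hAB => isOrtho_iff_le.mpr ?_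
  refine le_orthogonal_of_minimal_of_not_le hdistrib hinf A.2 B.2.1.1 (hcompl _ B.2.1.1)
    fun hle => hAB ?_
  exact Subtype.ext (B.2.eq_of_le A.2.1 hle)

theorem exists_orthonormalBasis_forall_eq_span_image_of_distrib [FiniteDimensional 𝕜 E]
    (hbot : ⊥ ∈ L) (hinf : InfClosed L) (hsup : SupClosed L) (hcompl : ∀ K ∈ L, Kᗮ ∈ L)
    (hdistrib : ∀ K ∈ L, ∀ M ∈ L, ∀ N ∈ L, K ⊓ (M ⊔ N) = (K ⊓ M) ⊔ (K ⊓ N)) :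
    ∃ e : OrthonormalBasis (Fin (finrank 𝕜 E)) 𝕜 E, ∀ K ∈ L, ∃ S, K = span 𝕜 (e '' S) := by
  let V := fun A : {A // Minimal (fun A => A ∈ L ∧ A ≠ ⊥) A} => (A : Submodule 𝕜 E)
  have hV := orthogonalFamily_minimal_nonzero_of_distrib hdistrib hinf hcompl
  have := WellFoundedGT.finite_of_iSupIndep hV.independent fun A => A.2.1.2
  have hV_mem : iSup V ∈ L := hsup.iSup_mem hbot fun A => A.2.1.1
  have hV_top : (iSup V)ᗮ = ⊥ := by
    by_contra hne
    obtain ⟨A, hAle, hA⟩ := exists_minimal_le_of_wellFoundedLT (fun A => A ∈ L ∧ A ≠ ⊥) _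
      ⟨hcompl _ hV_mem, hne⟩
    refine hA.1.2 (eq_bot_iff.mpr ?_)
    exact (iSup V).inf_orthogonal_eq_bot ▸ le_inf (le_iSup V ⟨A, hA⟩) hAle
  obtain ⟨e, he⟩ := hV.exists_orthonormalBasis_forall_eq_span_image hV_top
  refine ⟨e, fun K hK => he K fun A => or_iff_not_imp_left.mpr fun hAK => ?_⟩
  exact le_orthogonal_of_minimal_of_not_le hdistrib hinf A.2 hK (hcompl K hK) hAK

end InnerProductSpace

theorem boolean_iff_exists_orthonormalBasis_general
    {H : Type*} [NormedAddCommGroup H] [InnerProductSpace ℂ H] [FiniteDimensional ℂ H]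
    (L : Set (Submodule ℂ H))
    (hbot : ⊥ ∈ L)
    (hinf : ∀ K ∈ L, ∀ M ∈ L, K ⊓ M ∈ L)
    (hsup : ∀ K ∈ L, ∀ M ∈ L, K ⊔ M ∈ L)
    (hcompl : ∀ K ∈ L, Kᗮ ∈ L) :
    (∀ K ∈ L, ∀ M ∈ L, ∀ N ∈ L, K ⊓ (M ⊔ N) = (K ⊓ M) ⊔ (K ⊓ N)) ↔
      ∃ (n : ℕ) (e : OrthonormalBasis (Fin n) ℂ H),
        ∀ K ∈ L, ∃ S : Set (Fin n), K = Submodule.span ℂ (⇑e '' S) := by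
  constructor
  · intro hdistrib
    exact ⟨_, exists_orthonormalBasis_forall_eq_span_image_of_distrib hbot
      (fun K hK M hM => hinf K hK M hM) (fun K hK M hM => hsup K hK M hM) hcompl hdistrib⟩
  · rintro ⟨n, e, he⟩ K hK M hM N hN
    obtain ⟨S, rfl⟩ := he K hK
    obtain ⟨T, rfl⟩ := he M hM
    obtain ⟨U, rfl⟩ := he N hN
    simp only [← span_union, ← Set.image_union, ← e.coe_toBasis,
      e.toBasis.span_image_inf_span_image, Set.inter_union_distrib_left]

/-- An orthocomplemented sublattice `L` of the lattice of subspaces of a finite-dimensional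
complex inner product space is Boolean (distributive) if and only if there exists an
orthonormal basis `e` of `H` such that every member of `L` is the span of a subset of the
basis vectors. -/
theorem boolean_iff_exists_orthonormalBasis
    {H : Type*} [NormedAddCommGroup H] [InnerProductSpace ℂ H] [FiniteDimensional ℂ H]
    (L : Set (Submodule ℂ H))
    (hbot : ⊥ ∈ L) (htop : ⊤ ∈ L)
    (hinf : ∀ K ∈ L, ∀ M ∈ L, K ⊓ M ∈ L)
    (hsup : ∀ K ∈ L, ∀ M ∈ L, K ⊔ M ∈ L)
    (hcompl : ∀ K ∈ L, Kᗮ ∈ L) :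
    (∀ K ∈ L, ∀ M ∈ L, ∀ N ∈ L, K ⊓ (M ⊔ N) = (K ⊓ M) ⊔ (K ⊓ N)) ↔
      ∃ (n : ℕ) (e : OrthonormalBasis (Fin n) ℂ H),
        ∀ K ∈ L, ∃ S : Set (Fin n), K = Submodule.span ℂ (⇑e '' S) :=
  boolean_iff_exists_orthonormalBasis_general L hbot hinf hsup hcompl
end

section
/- Let H be a finite-dimensional complex inner product space and let C be a unital star-subalgebra of the algebra H →L[ℂ] H of continuous linear endomorphisms of H (with star given by the adjoint). Then C is commutative (∀ a b ∈ C, a * b = b * a) if and only if there exists an orthonormal basis e : ι → H (ι a finite type) such that every T ∈ C is diagonal with respect to e, i.e. for every T ∈ C and every i : ι there exists c : ℂ with T (e i) = c • e i. -/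
/-!
The self-adjoint elements of a commutative `C` form a commuting family of symmetric operators,
so `H` is the orthogonal sum of their joint eigenspaces. An orthonormal basis subordinate to
this decomposition diagonalizes every self-adjoint element of `C`, hence every `T ∈ C`, since
`T = ℜ T + i ℑ T` with `ℜ T, ℑ T ∈ C` self-adjoint. Conversely, operators that are diagonal in a
common basis commute.
-/

open Module Module.End ComplexStarModule
open scoped Function

theorem Module.Basis.commute_of_forall_apply_eq_smul {R M ι : Type*} [CommSemiring R]
    [AddCommMonoid M] [Module R M] (b : Basis ι R M) {f g : Module.End R M}
    (hf : ∀ i, ∃ c : R, f (b i) = c • b i) (hg : ∀ i, ∃ c : R, g (b i) = c • b i) :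
    Commute f g := by
  refine b.ext fun i => ?_
  obtain ⟨c, hc⟩ := hf i
  obtain ⟨d, hd⟩ := hg i
  simp only [Module.End.mul_apply, hc, hd, map_smul, smul_smul, mul_comm]

section FiniteDimensional

variable {𝕜 E ι : Type*} [RCLike 𝕜] [NormedAddCommGroup E] [InnerProductSpace 𝕜 E]
  [FiniteDimensional 𝕜 E]

theorem OrthogonalFamily.exists_orthonormalBasis_subordinate {V : ι → Submodule 𝕜 E}
    (hV : OrthogonalFamily 𝕜 (fun i => V i) fun i => (V i).subtypeₗᵢ) (hV_top : ⨆ i, V i = ⊤) :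
    ∃ e : OrthonormalBasis (Fin (finrank 𝕜 E)) 𝕜 E, ∀ a, ∃ i, e a ∈ V i := by
  classical
  -- An independent family has only finitely many nonzero members; the basis needs a finite index.
  have : Finite {i // V i ≠ ⊥} := WellFoundedGT.finite_ne_bot_of_iSupIndep hV.independent
  have : Fintype {i // V i ≠ ⊥} := Fintype.ofFinite _
  have hW : OrthogonalFamily 𝕜 (fun i : {i // V i ≠ ⊥} => V i) fun i => (V i).subtypeₗᵢ :=
    hV.comp Subtype.val_injective
  have hW_internal : DirectSum.IsInternal fun i : {i // V i ≠ ⊥} => V i := by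
    rw [hW.isInternal_iff, iSup_ne_bot_subtype, hV_top, Submodule.top_orthogonal_eq_bot]
  exact ⟨hW_internal.subordinateOrthonormalBasis rfl hW,
    fun a => ⟨_, hW_internal.subordinateOrthonormalBasis_subordinate rfl a hW⟩⟩

theorem LinearMap.IsSymmetric.exists_orthonormalBasis_forall_apply_eq_smul_of_commute
    {T : ι → Module.End 𝕜 E} (hT : ∀ i, (T i).IsSymmetric) (hC : Pairwise (Commute on T)) :
    ∃ e : OrthonormalBasis (Fin (finrank 𝕜 E)) 𝕜 E, ∀ i a, ∃ c : 𝕜, T i (e a) = c • e a := by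
  obtain ⟨e, he⟩ := (orthogonalFamily_iInf_eigenspaces hT).exists_orthonormalBasis_subordinate
    (iSup_iInf_eq_top_of_commute hT hC)
  refine ⟨e, fun i a => ?_⟩
  obtain ⟨χ, hχ⟩ := he a
  exact ⟨χ i, mem_eigenspace_iff.mp ((Submodule.mem_iInf _).mp hχ i)⟩

end FiniteDimensional

namespace StarSubalgebra

variable {A : Type*} [Ring A] [StarRing A] [Algebra ℂ A] [StarModule ℂ A]

theorem realPart_mem (S : StarSubalgebra ℂ A) {a : A} (ha : a ∈ S) : (ℜ a : A) ∈ S := by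
  rw [realPart_apply_coe]
  exact S.smul_mem (add_mem ha (star_mem ha)) _

theorem imaginaryPart_mem (S : StarSubalgebra ℂ A) {a : A} (ha : a ∈ S) : (ℑ a : A) ∈ S := by
  rw [imaginaryPart_apply_coe]
  exact S.smul_mem (S.smul_mem (sub_mem ha (star_mem ha)) _) _

end StarSubalgebra

theorem ContinuousLinearMap.exists_apply_eq_smul_of_realPart_imaginaryPart {H : Type*}
    [NormedAddCommGroup H] [InnerProductSpace ℂ H] [CompleteSpace H] {T : H →L[ℂ] H} {x : H}
    (hre : ∃ c : ℂ, (ℜ T : H →L[ℂ] H) x = c • x) (him : ∃ c : ℂ, (ℑ T : H →L[ℂ] H) x = c • x) :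
    ∃ c : ℂ, T x = c • x := by
  obtain ⟨c, hc⟩ := hre
  obtain ⟨d, hd⟩ := him
  refine ⟨c + Complex.I * d, ?_⟩
  conv_lhs => rw [← realPart_add_I_smul_imaginaryPart T]
  rw [add_apply, smul_apply, hc, hd, smul_smul, add_smul]

/-- A unital star-subalgebra `C` of the algebra of continuous linear endomorphisms of a
finite-dimensional complex inner product space `H` (with star the adjoint) is commutative
if and only if there exists an orthonormal basis of `H` simultaneously diagonalizing all
members of `C`. -/
theorem commutative_starSubalgebra_iff_simultaneously_diagonal
    {H : Type*} [NormedAddCommGroup H] [InnerProductSpace ℂ H] [FiniteDimensional ℂ H]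
    (C : StarSubalgebra ℂ (H →L[ℂ] H)) :
    (∀ a ∈ C, ∀ b ∈ C, a * b = b * a) ↔
      ∃ (n : ℕ) (e : OrthonormalBasis (Fin n) ℂ H),
        ∀ T ∈ C, ∀ i : Fin n, ∃ c : ℂ, T (e i) = c • e i := by
  constructor
  · intro hC
    let S : {a // a ∈ C ∧ IsSelfAdjoint a} → Module.End ℂ H := fun a => a.1
    have hS : ∀ a, (S a).IsSymmetric := fun a =>
      ContinuousLinearMap.isSelfAdjoint_iff_isSymmetric.mp a.2.2
    have hS_commute : Pairwise (Commute on S) := fun a b _ =>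
      congrArg ContinuousLinearMap.toLinearMap (hC _ a.2.1 _ b.2.1)
    obtain ⟨e, he⟩ :=
      LinearMap.IsSymmetric.exists_orthonormalBasis_forall_apply_eq_smul_of_commute hS hS_commute
    refine ⟨_, e, fun T hT i => ?_⟩
    exact ContinuousLinearMap.exists_apply_eq_smul_of_realPart_imaginaryPart
      (he ⟨ℜ T, C.realPart_mem hT, (ℜ T).2⟩ i) (he ⟨ℑ T, C.imaginaryPart_mem hT, (ℑ T).2⟩ i)
  · rintro ⟨n, e, he⟩ a ha b hb
    exact ContinuousLinearMap.coe_injective <|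
      e.toBasis.commute_of_forall_apply_eq_smul (by simpa using he a ha) (by simpa using he b hb)
end
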